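/- Fix l > 0 and let y_m be the minimum vectors for G₂. Then for every f₀ ∈ ℤ² and every integer k ≥ 3, there exist integers a, b ∈ ℤ such that G₂ f₀ / l = a·y_{k−1} + b·y_{k−2}. In particular, for k = 3 one may take G₂ f₀ / l = (−3 f_{0,1} + f_{0,2})·y₁ − f_{0,1}·y₂, where f₀ = (f_{0,1}, f_{0,2}). -/

import Mathlib

open Matrix

/-- The generator matrix `G₂` of the 15-degree rotated hexagonal lattice. -/
noncomputable def G₂ : Matrix (Fin 2) (Fin 2) ℝ :=
  !![(Real.sqrt 3 - 1) / (2 * Real.sqrt 2), -(Real.sqrt 3 + 1) / (2 * Real.sqrt 2);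
     -(Real.sqrt 3 + 1) / (2 * Real.sqrt 2), (Real.sqrt 3 - 1) / (2 * Real.sqrt 2)]

/-- The minimum vectors `y_m` for `G₂`. -/
noncomputable def yvec (l : ℝ) (m : ℕ) : ℝ × ℝ :=
  if m % 2 = 1 then
    (-((Real.sqrt 3 + 1) ^ m) / ((2 : ℝ) ^ ((m - 1) / 2) * 2 * Real.sqrt 2) / l,
      ((Real.sqrt 3 - 1) ^ m) / ((2 : ℝ) ^ ((m - 1) / 2) * 2 * Real.sqrt 2) / l)
  else
    (((Real.sqrt 3 + 1) ^ m) / ((2 : ℝ) ^ (m / 2 - 1) * 2 * Real.sqrt 2) / l,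
      ((Real.sqrt 3 - 1) ^ m) / ((2 : ℝ) ^ (m / 2 - 1) * 2 * Real.sqrt 2) / l)

/-!
With `s = √3 + 1` and `t = √3 - 1` one has `s² = 2s + 2` and `t² = 2 - 2t`. These quadratic
relations give the three-term recurrence `y_m = y_{m+2} + c_m y_{m+1}` with `c_m = 1` for odd `m`
and `c_m = 2` for even `m`, so the `ℤ`-span of two consecutive minimum vectors does not depend on
where the pair starts; the same relations write `G₂ f / l` in terms of `y₁` and `y₂`.
-/

theorem Submodule.span_pair_add_smul {R M : Type*} [Ring R] [AddCommGroup M] [Module R M]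
    (x y : M) (c : R) : span R {x + c • y, y} = span R {x, y} := by
  have hx : x ∈ span R {x, y} := subset_span (by simp)
  have hy : y ∈ span R {x, y} := subset_span (by simp)
  have hx' : x + c • y ∈ span R {x + c • y, y} := subset_span (by simp)
  have hy' : y ∈ span R {x + c • y, y} := subset_span (by simp)
  apply le_antisymm
  · rw [span_le, Set.insert_subset_iff, Set.singleton_subset_iff]
    exact ⟨add_mem hx (smul_mem _ c hy), hy⟩
  · rw [span_le, Set.insert_subset_iff, Set.singleton_subset_iff]
    refine ⟨?_, hy'⟩
    simpa using sub_mem hx' (smul_mem _ c hy')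

theorem sqrt_three_add_one_sq : (√3 + 1) ^ 2 = 2 * (√3 + 1) + 2 := by
  linear_combination Real.sq_sqrt (show (0 : ℝ) ≤ 3 by norm_num)

theorem sqrt_three_sub_one_sq : (√3 - 1) ^ 2 = 2 - 2 * (√3 - 1) := by
  linear_combination Real.sq_sqrt (show (0 : ℝ) ≤ 3 by norm_num)

theorem yvec_odd (l : ℝ) (j : ℕ) :
    yvec l (2 * j + 1) =
      (-(√3 + 1) ^ (2 * j + 1) / (2 ^ j * 2 * √2) / l,
        (√3 - 1) ^ (2 * j + 1) / (2 ^ j * 2 * √2) / l) := by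
  simp [yvec]

theorem yvec_even (l : ℝ) (j : ℕ) :
    yvec l (2 * j + 2) =
      ((√3 + 1) ^ (2 * j + 2) / (2 ^ j * 2 * √2) / l,
        (√3 - 1) ^ (2 * j + 2) / (2 ^ j * 2 * √2) / l) := by
  simp [yvec]

theorem yvec_odd_eq_add (l : ℝ) (j : ℕ) :
    yvec l (2 * j + 1) = yvec l (2 * j + 3) + yvec l (2 * j + 2) := by
  have h3 : yvec l (2 * j + 3) = yvec l (2 * (j + 1) + 1) := rfl
  rw [h3, yvec_odd, yvec_odd, yvec_even, Prod.mk_add_mk, Prod.mk.injEq]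
  constructor
  · linear_combination ((√3 + 1) ^ (2 * j + 1) / (2 ^ j * 2 * √2) / l / 2) * sqrt_three_add_one_sq
  · linear_combination (-(√3 - 1) ^ (2 * j + 1) / (2 ^ j * 2 * √2) / l / 2) * sqrt_three_sub_one_sq

theorem yvec_even_eq_add_two_smul (l : ℝ) (j : ℕ) :
    yvec l (2 * j + 2) = yvec l (2 * j + 4) + (2 : ℤ) • yvec l (2 * j + 3) := by
  have h4 : yvec l (2 * j + 4) = yvec l (2 * (j + 1) + 2) := rfl
  have h3 : yvec l (2 * j + 3) = yvec l (2 * (j + 1) + 1) := rfl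
  rw [h4, h3, yvec_odd, yvec_even, yvec_even, Prod.smul_mk, Prod.mk_add_mk, Prod.mk.injEq,
    zsmul_eq_mul, zsmul_eq_mul]
  constructor
  · linear_combination (-(√3 + 1) ^ (2 * j + 2) / (2 ^ j * 2 * √2) / l / 2) * sqrt_three_add_one_sq
  · linear_combination (-(√3 - 1) ^ (2 * j + 2) / (2 ^ j * 2 * √2) / l / 2) * sqrt_three_sub_one_sq

theorem exists_yvec_eq_add_zsmul (l : ℝ) (m : ℕ) :
    ∃ c : ℤ, yvec l (m + 1) = yvec l (m + 3) + c • yvec l (m + 2) := by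
  obtain ⟨j, rfl | rfl⟩ := Nat.even_or_odd' m
  · exact ⟨1, by simpa using yvec_odd_eq_add l j⟩
  · exact ⟨2, by simpa [add_assoc] using yvec_even_eq_add_two_smul l j⟩

theorem span_yvec_pair (l : ℝ) (m : ℕ) :
    Submodule.span ℤ {yvec l (m + 1), yvec l (m + 2)} = Submodule.span ℤ {yvec l 1, yvec l 2} := by
  induction m with
  | zero => rfl
  | succ m ih =>
    obtain ⟨c, hc⟩ := exists_yvec_eq_add_zsmul l m
    rw [← ih, hc, Submodule.span_pair_add_smul, Set.pair_comm]

theorem G₂_mulVec_div_eq (l : ℝ) (f : Fin 2 → ℤ) :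
    ((G₂ *ᵥ fun i => (f i : ℝ)) 0 / l, (G₂ *ᵥ fun i => (f i : ℝ)) 1 / l) =
      (-3 * f 0 + f 1) • yvec l 1 + (-f 0) • yvec l 2 := by
  simp only [G₂, yvec, mulVec, dotProduct, Fin.sum_univ_two]
  norm_num [Prod.ext_iff]
  constructor
  · linear_combination (f 0 / (2 * √2) / l) * sqrt_three_add_one_sq
  · linear_combination (f 0 / (2 * √2) / l) * sqrt_three_sub_one_sq

theorem lattice_point_integer_combination (l : ℝ) :
    (∀ (f₀ : Fin 2 → ℤ) (k : ℕ), 3 ≤ k → ∃ a b : ℤ,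
      G₂.mulVec (fun i => (f₀ i : ℝ)) 0 / l =
        (a : ℝ) * (yvec l (k - 1)).1 + (b : ℝ) * (yvec l (k - 2)).1 ∧
      G₂.mulVec (fun i => (f₀ i : ℝ)) 1 / l =
        (a : ℝ) * (yvec l (k - 1)).2 + (b : ℝ) * (yvec l (k - 2)).2) ∧
    (∀ f₀ : Fin 2 → ℤ,
      G₂.mulVec (fun i => (f₀ i : ℝ)) 0 / l =
        ((-3 * f₀ 0 + f₀ 1 : ℤ) : ℝ) * (yvec l 1).1 + ((-f₀ 0 : ℤ) : ℝ) * (yvec l 2).1 ∧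
      G₂.mulVec (fun i => (f₀ i : ℝ)) 1 / l =
        ((-3 * f₀ 0 + f₀ 1 : ℤ) : ℝ) * (yvec l 1).2 + ((-f₀ 0 : ℤ) : ℝ) * (yvec l 2).2) := by
  refine ⟨fun f₀ k hk => ?_, fun f₀ => by
    simpa [zsmul_eq_mul] using Prod.ext_iff.1 (G₂_mulVec_div_eq l f₀)⟩
  obtain ⟨m, rfl⟩ : ∃ m, k = m + 3 := ⟨k - 3, by omega⟩
  have hmem : ((G₂ *ᵥ fun i => (f₀ i : ℝ)) 0 / l, (G₂ *ᵥ fun i => (f₀ i : ℝ)) 1 / l) ∈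
      Submodule.span ℤ {yvec l (m + 2), yvec l (m + 1)} := by
    rw [Set.pair_comm, span_yvec_pair, G₂_mulVec_div_eq]
    exact Submodule.mem_span_pair.2 ⟨_, _, rfl⟩
  obtain ⟨a, b, hab⟩ := Submodule.mem_span_pair.1 hmem
  exact ⟨a, b, by simpa [zsmul_eq_mul] using Prod.ext_iff.1 hab.symm⟩
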